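/- The number of walks of length 2m from (0,0) back to (0,0) with steps E=(1,0), W=(-1,0), NW=(-1,1), SE=(1,-1), confined to the quarter plane, equals 6·(2m)!·(2m+2)! / (m!(m+1)!(m+2)!(m+3)!). -/

import Mathlib

/-!
In the coordinates `a = x + 1`, `b = x + 2 y + 3` the steps E, W, NW, SE become the four diagonal
steps `(±1, ±1)`, i.e. a pair of independent simple walks, the quarter plane becomes the Weyl
chamber `0 < a < b` of type B₂, and the origin becomes `(1, 3)`. The reflection principle counts
walks in this chamber by a `2 × 2` determinant of one-dimensional reflected path counts; it
satisfies the same recursion as the walk count and vanishes on both walls `a = 0` and `a = b`.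
At the origin its entries are differences of the binomials `C(2m, m + i)`, `0 ≤ i ≤ 3`, and the
product formula becomes a rational identity.
-/

/-- Number of quarter-plane walks of length `n` with steps in `S`, starting at `(0,0)`,
staying in the quarter plane, and ending at `e`. -/
noncomputable def qwalkCount (S : Set (ℤ × ℤ)) (n : ℕ) (e : ℤ × ℤ) : ℕ :=
  Nat.card {w : Fin (n + 1) → ℤ × ℤ //
    w 0 = (0, 0) ∧
    (∀ i : Fin n, w i.succ - w i.castSucc ∈ S) ∧
    (∀ i, 0 ≤ (w i).1 ∧ 0 ≤ (w i).2) ∧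
    w (Fin.last n) = e}

open scoped Nat

def InQuadrant (p : ℤ × ℤ) : Prop := 0 ≤ p.1 ∧ 0 ≤ p.2

def QWalk (S : Set (ℤ × ℤ)) (n : ℕ) (e : ℤ × ℤ) : Type :=
  {w : Fin (n + 1) → ℤ × ℤ //
    w 0 = (0, 0) ∧
    (∀ i : Fin n, w i.succ - w i.castSucc ∈ S) ∧
    (∀ i, InQuadrant (w i)) ∧
    w (Fin.last n) = e}

theorem qwalkCount_eq_card (S : Set (ℤ × ℤ)) (n : ℕ) (e : ℤ × ℤ) :
    qwalkCount S n e = Nat.card (QWalk S n e) := rfl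

namespace QWalk

variable {S : Set (ℤ × ℤ)} {n : ℕ} {e : ℤ × ℤ}

theorem inQuadrant_end (w : QWalk S n e) : InQuadrant e := w.2.2.2.2 ▸ w.2.2.2.1 (Fin.last n)

instance : Subsingleton (QWalk S 0 e) :=
  ⟨fun w v => Subtype.ext <| funext fun i => by rw [Fin.fin_one_eq_zero i, w.2.1, v.2.1]⟩

theorem nonempty_zero_iff : Nonempty (QWalk S 0 e) ↔ e = (0, 0) := by
  refine ⟨fun ⟨w⟩ => w.2.2.2.2 ▸ w.2.1, ?_⟩
  rintro rfl
  exact ⟨⟨fun _ => (0, 0), rfl, Fin.elim0, fun _ => ⟨le_rfl, le_rfl⟩, rfl⟩⟩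

def succEquiv (S : Set (ℤ × ℤ)) (n : ℕ) (he : InQuadrant e) :
    QWalk S (n + 1) e ≃ Σ s : S, QWalk S n (e - s) where
  toFun w :=
    ⟨⟨e - w.1 (Fin.last n).castSucc, by
        have h := w.2.2.1 (Fin.last n)
        rwa [Fin.succ_last, w.2.2.2.2] at h⟩,
      ⟨Fin.init w.1, w.2.1, fun i => by simpa [Fin.init] using w.2.2.1 i.castSucc,
        fun i => w.2.2.2.1 _, by simp [Fin.init]⟩⟩
  invFun p := by
    refine ⟨Fin.snoc p.2.1 e, ?_, fun i => ?_, fun i => ?_, Fin.snoc_last _ _⟩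
    · rw [Fin.snoc_apply_zero]; exact p.2.2.1
    · induction i using Fin.lastCases with
      | last => simp [p.2.2.2.2.2]
      | cast i =>
        rw [Fin.succ_castSucc, Fin.snoc_castSucc, Fin.snoc_castSucc]; exact p.2.2.2.1 i
    · induction i using Fin.lastCases with
      | last => simpa using he
      | cast i => simpa using p.2.2.2.2.1 i
  left_inv w := Subtype.ext <| by
    conv_rhs => rw [← Fin.snoc_init_self w.1, w.2.2.2.2]
  right_inv := by
    rintro ⟨⟨s, hs⟩, w, hw⟩
    have hs' : e - Fin.snoc (α := fun _ => ℤ × ℤ) w e (Fin.last n).castSucc = s := by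
      simp [hw.2.2.2]
    refine Sigma.ext (Subtype.ext hs') ?_
    subst hs'
    exact heq_of_eq (Subtype.ext (Fin.init_snoc (α := fun _ => ℤ × ℤ) _ _))

instance (S : Finset (ℤ × ℤ)) (n : ℕ) (e : ℤ × ℤ) : Finite (QWalk S n e) := by
  induction n generalizing e with
  | zero => infer_instance
  | succ n ih =>
    by_cases he : InQuadrant e
    · exact Finite.of_equiv _ (succEquiv (S : Set (ℤ × ℤ)) n he).symm
    · have : IsEmpty (QWalk S (n + 1) e) := ⟨fun w => he w.inQuadrant_end⟩
      infer_instance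

end QWalk

theorem qwalkCount_zero (S : Set (ℤ × ℤ)) (e : ℤ × ℤ) :
    qwalkCount S 0 e = if e = (0, 0) then 1 else 0 := by
  rw [qwalkCount_eq_card]
  split_ifs with he
  · exact Nat.card_eq_one_iff_unique.2 ⟨inferInstance, QWalk.nonempty_zero_iff.2 he⟩
  · exact Nat.card_eq_zero.2 (Or.inl (not_nonempty_iff.1 (mt QWalk.nonempty_zero_iff.1 he)))

theorem qwalkCount_eq_zero_of_not_inQuadrant (S : Set (ℤ × ℤ)) (n : ℕ) {e : ℤ × ℤ}
    (he : ¬InQuadrant e) : qwalkCount S n e = 0 :=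
  Nat.card_eq_zero.2 (Or.inl ⟨fun (w : QWalk S n e) => he w.inQuadrant_end⟩)

theorem qwalkCount_succ (S : Finset (ℤ × ℤ)) (n : ℕ) {e : ℤ × ℤ} (he : InQuadrant e) :
    qwalkCount S (n + 1) e = ∑ s ∈ S, qwalkCount S n (e - s) := by
  rw [qwalkCount_eq_card, Nat.card_congr (QWalk.succEquiv (S : Set (ℤ × ℤ)) n he), Nat.card_sigma]
  exact Finset.sum_coe_sort S fun s => qwalkCount S n (e - s)

def linePaths : ℕ → ℤ → ℤ
  | 0, u => if u = 0 then 1 else 0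
  | n + 1, u => linePaths n (u - 1) + linePaths n (u + 1)

theorem linePaths_succ (n : ℕ) (u : ℤ) :
    linePaths (n + 1) u = linePaths n (u - 1) + linePaths n (u + 1) := rfl

theorem linePaths_neg (n : ℕ) (u : ℤ) : linePaths n (-u) = linePaths n u := by
  induction n generalizing u with
  | zero => simp [linePaths]
  | succ n ih =>
    rw [linePaths_succ, linePaths_succ, show -u - 1 = -(u + 1) by ring,
      show -u + 1 = -(u - 1) by ring, ih, ih, add_comm]

theorem linePaths_eq_zero_of_lt {n : ℕ} {u : ℤ} (h : (n : ℤ) < u) : linePaths n u = 0 := by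
  induction n generalizing u with
  | zero => simp [linePaths]; omega
  | succ n ih => rw [linePaths_succ, ih (by omega), ih (by omega), add_zero]

theorem linePaths_two_mul_sub (n j : ℕ) : linePaths n (2 * j - n) = n.choose j := by
  induction n generalizing j with
  | zero => cases j <;> simp [linePaths]; omega
  | succ n ih =>
    rw [linePaths_succ]
    cases j with
    | zero =>
      rw [show 2 * ((0 : ℕ) : ℤ) - ↑(n + 1) - 1 = -(n + 2) by push_cast; ring, linePaths_neg,
        linePaths_eq_zero_of_lt (by omega), show 2 * ((0 : ℕ) : ℤ) - ↑(n + 1) + 1 = 2 * 0 - n by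
          push_cast; ring]
      simpa using ih 0
    | succ j =>
      rw [show 2 * ((j + 1 : ℕ) : ℤ) - ↑(n + 1) - 1 = 2 * j - n by push_cast; ring,
        show 2 * ((j + 1 : ℕ) : ℤ) - ↑(n + 1) + 1 = 2 * (j + 1 : ℕ) - n by push_cast; ring,
        ih, ih, Nat.choose_succ_succ, Nat.cast_add]

theorem linePaths_two_mul_even (m k : ℕ) :
    linePaths (2 * m) (2 * k) = (2 * m).choose (m + k) := by
  rw [← linePaths_two_mul_sub]; push_cast; ring_nf

/-- By the reflection principle, for `0 < p` and `0 < u` this counts the `±1` walks of length `n`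
from `p` to `u` that avoid `0`. -/
def reflectedPaths (n : ℕ) (p u : ℤ) : ℤ := linePaths n (u - p) - linePaths n (u + p)

theorem reflectedPaths_succ (n : ℕ) (p u : ℤ) :
    reflectedPaths (n + 1) p u = reflectedPaths n p (u - 1) + reflectedPaths n p (u + 1) := by
  simp only [reflectedPaths, linePaths_succ]; ring_nf

theorem reflectedPaths_zero_right (n : ℕ) (p : ℤ) : reflectedPaths n p 0 = 0 := by
  rw [reflectedPaths, zero_sub, linePaths_neg, zero_add, sub_self]

/-- Walks of `n` diagonal steps `(±1, ±1)` from `(1, 3)` to `(a, b)` inside `0 < a < b`, as the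
alternating sum over the eight signed permutations of the start point. -/
def chamberCount (n : ℕ) (a b : ℤ) : ℤ :=
  reflectedPaths n 1 a * reflectedPaths n 3 b - reflectedPaths n 3 a * reflectedPaths n 1 b

theorem chamberCount_succ (n : ℕ) (a b : ℤ) :
    chamberCount (n + 1) a b = chamberCount n (a - 1) (b - 1) + chamberCount n (a + 1) (b + 1)
      + chamberCount n (a + 1) (b - 1) + chamberCount n (a - 1) (b + 1) := by
  simp only [chamberCount, reflectedPaths_succ]; ring

theorem chamberCount_zero_left (n : ℕ) (b : ℤ) : chamberCount n 0 b = 0 := by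
  simp [chamberCount, reflectedPaths_zero_right]

theorem chamberCount_self (n : ℕ) (a : ℤ) : chamberCount n a a = 0 := by
  rw [chamberCount, mul_comm, sub_self]

theorem chamberCount_zero {a b : ℤ} (ha : 0 ≤ a) (hab : a ≤ b) :
    chamberCount 0 a b = if a = 1 ∧ b = 3 then 1 else 0 := by
  simp only [chamberCount, reflectedPaths, linePaths]
  split_ifs <;> omega

theorem chamberCount_two_mul_one_three (m : ℕ) :
    chamberCount (2 * m) 1 3 =
      ((2 * m).choose m - (2 * m).choose (m + 1)) * ((2 * m).choose m - (2 * m).choose (m + 3))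
        - ((2 * m).choose (m + 1) - (2 * m).choose (m + 2) : ℤ) ^ 2 := by
  have h0 : linePaths (2 * m) 0 = (2 * m).choose m := by simpa using linePaths_two_mul_even m 0
  have h2 : linePaths (2 * m) 2 = (2 * m).choose (m + 1) := by
    simpa using linePaths_two_mul_even m 1
  have h4 : linePaths (2 * m) 4 = (2 * m).choose (m + 2) := by
    simpa using linePaths_two_mul_even m 2
  have h6 : linePaths (2 * m) 6 = (2 * m).choose (m + 3) := by
    simpa using linePaths_two_mul_even m 3
  simp only [chamberCount, reflectedPaths]
  norm_num [linePaths_neg, h0, h2, h4, h6]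
  ring

theorem cast_choose_succ_mul {R : Type*} [CommRing R] (n k : ℕ) :
    (n.choose (k + 1) : R) * (k + 1) = n.choose k * (n - k) := by
  rcases le_or_gt k n with hk | hk
  · have h := congrArg (Nat.cast : ℕ → R) (Nat.choose_succ_right_eq n k)
    push_cast [hk] at h
    exact h
  · rw [Nat.choose_eq_zero_of_lt hk, Nat.choose_eq_zero_of_lt (by omega)]; simp

theorem choose_det_mul_factorials (m : ℕ) :
    (((2 * m).choose m - (2 * m).choose (m + 1)) * ((2 * m).choose m - (2 * m).choose (m + 3))
        - ((2 * m).choose (m + 1) - (2 * m).choose (m + 2) : ℤ) ^ 2) *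
      (m ! * (m + 1)! * (m + 2)! * (m + 3)!) = 6 * (2 * m)! * (2 * m + 2)! := by
  have hc : ((2 * m).choose m : ℚ) * m ! * m ! = (2 * m)! := by
    exact_mod_cast (two_mul m ▸ Nat.add_choose_mul_factorial_mul_factorial m m)
  have ratio (k : ℕ) : ((2 * m).choose (m + k + 1) : ℚ) =
      (2 * m).choose (m + k) * (m - k) / (m + k + 1) := by
    rw [eq_div_iff (by positivity)]
    have h := cast_choose_succ_mul (R := ℚ) (2 * m) (m + k)
    push_cast at h
    linear_combination h
  have h1 := ratio 0
  have h2 := ratio 1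
  have h3 := ratio 2
  norm_num [add_assoc] at h1 h2 h3
  qify
  rw [h3, h2, h1, Nat.factorial_succ (2 * m + 1), Nat.factorial_succ (2 * m),
    Nat.factorial_succ (m + 2), Nat.factorial_succ (m + 1), Nat.factorial_succ m]
  push_cast
  rw [← hc]
  field_simp
  ring

def gouyouBeauchampsSteps : Finset (ℤ × ℤ) := {(1, 0), (-1, 0), (-1, 1), (1, -1)}

theorem sum_gouyouBeauchampsSteps {M : Type*} [AddCommMonoid M] (f : ℤ × ℤ → M) :
    ∑ s ∈ gouyouBeauchampsSteps, f s = f (1, 0) + f (-1, 0) + f (-1, 1) + f (1, -1) := by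
  rw [gouyouBeauchampsSteps, Finset.sum_insert (by decide), Finset.sum_insert (by decide),
    Finset.sum_pair (by decide), add_assoc, add_assoc]

/-- Stated down to `-1` so that the induction can step onto the walls, where both sides vanish. -/
theorem qwalkCount_gouyouBeauchampsSteps (n : ℕ) {x y : ℤ} (hx : -1 ≤ x) (hy : -1 ≤ y) :
    (qwalkCount gouyouBeauchampsSteps n (x, y) : ℤ) = chamberCount n (x + 1) (x + 2 * y + 3) := by
  induction n generalizing x y with
  | zero =>
    rw [qwalkCount_zero, chamberCount_zero (by omega) (by omega)]
    simp only [Prod.mk.injEq]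
    push_cast
    split_ifs <;> omega
  | succ n ih =>
    by_cases hq : InQuadrant (x, y)
    · obtain ⟨hx, hy⟩ := hq
      rw [qwalkCount_succ _ _ ⟨hx, hy⟩, sum_gouyouBeauchampsSteps]
      simp only [Prod.mk_sub_mk, Nat.cast_add]
      rw [ih (by omega) (by omega), ih (by omega) (by omega), ih (by omega) (by omega),
        ih (by omega) (by omega), chamberCount_succ]
      ring_nf
    · rw [qwalkCount_eq_zero_of_not_inQuadrant _ _ hq, Nat.cast_zero]
      rcases (show x = -1 ∨ y = -1 by simp only [InQuadrant] at hq; omega) with rfl | rfl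
      · rw [neg_add_cancel, chamberCount_zero_left]
      · rw [show x + 2 * -1 + 3 = x + 1 by ring, chamberCount_self]

theorem walks_EWNWSE_origin (m : ℕ) :
    qwalkCount {(1, 0), (-1, 0), (-1, 1), (1, -1)} (2 * m) (0, 0) *
      (Nat.factorial m * Nat.factorial (m + 1) * Nat.factorial (m + 2) *
        Nat.factorial (m + 3)) =
    6 * Nat.factorial (2 * m) * Nat.factorial (2 * m + 2) := by
  have hcount : (qwalkCount {(1, 0), (-1, 0), (-1, 1), (1, -1)} (2 * m) (0, 0) : ℤ) =
      chamberCount (2 * m) 1 3 := by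
    simpa [gouyouBeauchampsSteps] using
      qwalkCount_gouyouBeauchampsSteps (2 * m) (x := 0) (y := 0) (by norm_num) (by norm_num)
  zify
  rw [hcount, chamberCount_two_mul_one_three]
  exact choose_det_mul_factorials m
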